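/- arXiv:1106.0424 — 3 statements merged into one kernel-verified Lean document; each statement's English description precedes it below -/
import Mathlib

section
/- Let κ ∈ ℝ, σ > 0, and suppose for each nonzero u the complex number z(u) = a(Pu,u)/⟨x_u, x_u⟩ satisfies Im a(Pu,u) = σ‖∇Pu‖² and Re a(Pu,u) = ‖u‖² - κ²‖∇Pu‖², and that c h^d |x_u|² ≤ ‖u‖² ≤ C h^d |x_u|². Then every z in the field of values of the Laplace-preconditioned matrix satisfies c h^d - (κ²/σ) Im z ≤ Re z ≤ C h^d - (κ²/σ) Im z. -/
open scoped ComplexInnerProductSpace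

theorem Complex.div_ofReal_re_add_mul_im (z : ℂ) (t r : ℝ) :
    (z / r).re + t * (z / r).im = (z.re + t * z.im) / r := by
  rw [Complex.div_ofReal_re, Complex.div_ofReal_im]
  ring

theorem div_mem_Icc_of_mul_le_of_le_mul {a b x n : ℝ} (hn : 0 < n) (ha : a * n ≤ x)
    (hb : x ≤ b * n) : x / n ∈ Set.Icc a b :=
  ⟨(le_div_iff₀ hn).2 ha, (div_le_iff₀ hn).2 hb⟩

theorem stmt_8_general {V W : Type*} [NormedAddCommGroup V] [InnerProductSpace ℂ V]
    [NormedAddCommGroup W] [InnerProductSpace ℂ W]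
    (G : V →ₗ[ℂ] W) (P : V →ₗ[ℂ] V) (κ σ c C h : ℝ) (d : ℕ)
    (hσ : 0 < σ)
    (A : V → ℂ)
    (hIm : ∀ u : V, (A u).im = σ * ‖G (P u)‖^2)
    (hRe : ∀ u : V, (A u).re = ‖u‖^2 - κ^2 * ‖G (P u)‖^2)
    (N : V → ℝ)
    (hNpos : ∀ u : V, u ≠ 0 → 0 < N u)
    (heq : ∀ u : V, c * h^d * N u ≤ ‖u‖^2 ∧ ‖u‖^2 ≤ C * h^d * N u)
    (u : V) (hu : u ≠ 0) :
    c * h^d - κ^2 / σ * (A u / (N u : ℂ)).im ≤ (A u / (N u : ℂ)).re ∧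
      (A u / (N u : ℂ)).re ≤ C * h^d - κ^2 / σ * (A u / (N u : ℂ)).im := by
  -- The weight κ²/σ is chosen so that the gradient terms of Re and Im cancel.
  have hstrip : (A u).re + κ^2 / σ * (A u).im = ‖u‖^2 := by
    rw [hRe, hIm]
    field_simp
    ring
  have hz := Complex.div_ofReal_re_add_mul_im (A u) (κ^2 / σ) (N u)
  rw [hstrip] at hz
  obtain ⟨hlo, hhi⟩ := div_mem_Icc_of_mul_le_of_le_mul (hNpos u hu) (heq u).1 (heq u).2
  constructor <;> linarith

/-- Strip bound for the field of values of the Laplace-preconditioned Helmholtz system: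
`N u` plays the role of `|x_u|²` (squared Euclidean norm of the coefficient vector),
`a (P u) u = ‖u‖² - κ²‖∇Pu‖² + iσ‖∇Pu‖²`, and the norm equivalence
`c h^d N u ≤ ‖u‖² ≤ C h^d N u` holds. -/
theorem stmt_8 {V W : Type*} [NormedAddCommGroup V] [InnerProductSpace ℂ V]
    [NormedAddCommGroup W] [InnerProductSpace ℂ W]
    (G : V →ₗ[ℂ] W) (P : V →ₗ[ℂ] V) (κ σ c C h : ℝ) (d : ℕ)
    (hσ : 0 < σ) (hc : 0 < c) (hC : 0 < C) (hh : 0 < h)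
    (A : V → ℂ)
    (hIm : ∀ u : V, (A u).im = σ * ‖G (P u)‖^2)
    (hRe : ∀ u : V, (A u).re = ‖u‖^2 - κ^2 * ‖G (P u)‖^2)
    (N : V → ℝ)
    (hNpos : ∀ u : V, u ≠ 0 → 0 < N u)
    (heq : ∀ u : V, c * h^d * N u ≤ ‖u‖^2 ∧ ‖u‖^2 ≤ C * h^d * N u)
    (u : V) (hu : u ≠ 0) :
    c * h^d - κ^2 / σ * (A u / (N u : ℂ)).im ≤ (A u / (N u : ℂ)).re ∧
      (A u / (N u : ℂ)).re ≤ C * h^d - κ^2 / σ * (A u / (N u : ℂ)).im :=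
  stmt_8_general G P κ σ c C h d hσ A hIm hRe N hNpos heq u hu
end

section
/- Let E : V_h → V_h be a linear map on a finite-dimensional inner product space with ‖Ev‖₁ ≤ Cγ‖v‖₁ for all v, where ‖·‖₁ is a norm with ‖v‖₀ ≤ C_P‖v‖₁ (Poincaré–Friedrichs). Suppose P̃ - P satisfies ⟨∇(P̃-P)u, ∇v⟩ = ⟨u, Ev⟩ for all u, v ∈ V_h, where ⟨∇·,∇·⟩ is the inner product inducing ‖·‖₁. Then ‖∇(P̃-P)u‖₀ = sup_{v≠0} ⟨u, Ev⟩/‖∇v‖₀ ≤ C C_P γ ‖u‖₀, and hence |⟨(P̃-P)u, u⟩| ≤ C C_P² γ ‖u‖₀² for all u. -/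
/-!
Testing the defining identity of `D = P̃ - P` with `v = D u` gives
`‖∇Du‖² = ⟪u, E D u⟫ ≤ ‖u‖ ‖E D u‖ ≤ C_P ‖u‖ ‖∇E D u‖ ≤ C C_P γ ‖u‖ ‖∇Du‖`
(Cauchy–Schwarz, Poincaré–Friedrichs, contraction), and one more Poincaré–Friedrichs
step turns this gradient bound into the bound on `⟪Du, u⟫`.
-/

open scoped ComplexInnerProductSpace

section

variable {V W : Type*} [NormedAddCommGroup V] [InnerProductSpace ℂ V]
  [NormedAddCommGroup W] [InnerProductSpace ℂ W]

theorem norm_le_of_norm_inner_self_le {w : W} {K : ℝ} (hK : 0 ≤ K)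
    (h : ‖⟪w, w⟫‖ ≤ K * ‖w‖) : ‖w‖ ≤ K := by
  rw [inner_self_eq_norm_sq_to_K, norm_pow, RCLike.norm_ofReal, abs_norm, sq] at h
  rcases (norm_nonneg w).eq_or_lt with hw | hw
  · rwa [← hw]
  · exact le_of_mul_le_mul_right h hw

theorem norm_inner_apply_le_of_poincare {G : V →ₗ[ℂ] W} {E : V →ₗ[ℂ] V} {C C_P γ : ℝ}
    (hCP : 0 ≤ C_P) (hE : ∀ v : V, ‖G (E v)‖ ≤ C * γ * ‖G v‖)
    (hPF : ∀ v : V, ‖v‖ ≤ C_P * ‖G v‖) (u v : V) :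
    ‖⟪u, E v⟫‖ ≤ C * C_P * γ * ‖u‖ * ‖G v‖ :=
  calc ‖⟪u, E v⟫‖ ≤ ‖u‖ * ‖E v‖ := norm_inner_le_norm _ _
    _ ≤ ‖u‖ * (C_P * ‖G (E v)‖) := by gcongr; exact hPF _
    _ ≤ ‖u‖ * (C_P * (C * γ * ‖G v‖)) := by gcongr; exact hE _
    _ = C * C_P * γ * ‖u‖ * ‖G v‖ := by ring

end

theorem stmt_11_general {V W : Type*} [NormedAddCommGroup V] [InnerProductSpace ℂ V]
    [NormedAddCommGroup W] [InnerProductSpace ℂ W]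
    (G : V →ₗ[ℂ] W) (E D : V →ₗ[ℂ] V) (C C_P γ : ℝ)
    (hC : 0 < C) (hCP : 0 < C_P) (hγ0 : 0 ≤ γ)
    (hE : ∀ v : V, ‖G (E v)‖ ≤ C * γ * ‖G v‖)
    (hPF : ∀ v : V, ‖v‖ ≤ C_P * ‖G v‖)
    (hD : ∀ u v : V, ⟪G (D u), G v⟫ = ⟪u, E v⟫)
    (u : V) :
    ‖G (D u)‖ ≤ C * C_P * γ * ‖u‖ ∧
      ‖⟪D u, u⟫‖ ≤ C * C_P^2 * γ * ‖u‖^2 := by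
  have hgrad : ‖G (D u)‖ ≤ C * C_P * γ * ‖u‖ := by
    refine norm_le_of_norm_inner_self_le (by positivity) ?_
    rw [hD]
    exact norm_inner_apply_le_of_poincare hCP.le hE hPF u (D u)
  refine ⟨hgrad, ?_⟩
  calc ‖⟪D u, u⟫‖ ≤ ‖D u‖ * ‖u‖ := norm_inner_le_norm _ _
    _ ≤ C_P * ‖G (D u)‖ * ‖u‖ := by gcongr; exact hPF _
    _ ≤ C_P * (C * C_P * γ * ‖u‖) * ‖u‖ := by gcongr
    _ = C * C_P ^ 2 * γ * ‖u‖ ^ 2 := by ring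

/-- Perturbation bound for the inexact Laplace preconditioner: with `D = P̃ - P`
satisfying `⟪∇Du, ∇v⟫ = ⟪u, Ev⟫`, the contraction `‖Ev‖₁ ≤ Cγ‖v‖₁` (where
`‖v‖₁ = ‖G v‖`) and Poincaré–Friedrichs `‖v‖₀ ≤ C_P‖G v‖` give
`‖G (D u)‖ ≤ C C_P γ ‖u‖` and `|⟪Du, u⟫| ≤ C C_P² γ ‖u‖²`. -/
theorem stmt_11 {V W : Type*} [NormedAddCommGroup V] [InnerProductSpace ℂ V]
    [NormedAddCommGroup W] [InnerProductSpace ℂ W]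
    (G : V →ₗ[ℂ] W) (E D : V →ₗ[ℂ] V) (C C_P γ : ℝ)
    (hC : 0 < C) (hCP : 0 < C_P) (hγ0 : 0 ≤ γ) (hγ1 : γ < 1)
    (hE : ∀ v : V, ‖G (E v)‖ ≤ C * γ * ‖G v‖)
    (hPF : ∀ v : V, ‖v‖ ≤ C_P * ‖G v‖)
    (hD : ∀ u v : V, ⟪G (D u), G v⟫ = ⟪u, E v⟫)
    (u : V) :
    ‖G (D u)‖ ≤ C * C_P * γ * ‖u‖ ∧
      ‖⟪D u, u⟫‖ ≤ C * C_P^2 * γ * ‖u‖^2 :=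
  stmt_11_general G E D C C_P γ hC hCP hγ0 hE hPF hD u
end

section
/- Let P_H satisfy a(P_H u, v_H) = ⟨u, v_H⟩ for all v_H ∈ V_H, I_H the a-orthogonal projection onto V_H, and Q defined by ⟨∇Qu,∇v⟩ = ⟨u,(I-I_H)v⟩. Then for all u ∈ V_h, a((P_H + Q)u, u) = ‖u‖₀² - κ²⟨Qu, u⟩ + i⟨σQu, u⟩, where a(u,v) = ⟨∇u,∇v⟩ - κ²⟨u,v⟩ + i⟨σu,v⟩. -/
open scoped ComplexInnerProductSpace

/-- Two-level preconditioner identity: with `P_H` the coarse solution operator,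
`I_H` the `a`-orthogonal projection onto the coarse space `V_H`, and `Q` the
residual-correction operator, one has
`a((P_H + Q)u, u) = ‖u‖₀² - κ²⟪Qu, u⟫ + i⟪σQu, u⟫`, where
`a(u,v) = ⟪∇u,∇v⟫ - κ²⟪u,v⟫ + i⟪σu,v⟫` and `σ` is modelled by the operator `T`. -/
theorem stmt_16 {V W : Type*} [NormedAddCommGroup V] [InnerProductSpace ℂ V]
    [NormedAddCommGroup W] [InnerProductSpace ℂ W]
    (G : V →ₗ[ℂ] W) (T P_H I_H Q : V →ₗ[ℂ] V) (V_H : Submodule ℂ V) (κ : ℝ)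
    (a : V → V → ℂ)
    (ha : ∀ u v, a u v = ⟪G v, G u⟫ - (κ:ℂ)^2 * ⟪v, u⟫ + Complex.I * ⟪v, T u⟫)
    (hPHrange : ∀ u : V, P_H u ∈ V_H)
    (hPH : ∀ u : V, ∀ v ∈ V_H, a (P_H u) v = ⟪v, u⟫)
    (hIHrange : ∀ u : V, I_H u ∈ V_H)
    (hIH : ∀ u : V, ∀ v ∈ V_H, a v (I_H u) = a v u)
    (hQ : ∀ u v : V, ⟪G v, G (Q u)⟫ = ⟪v - I_H v, u⟫) :
    ∀ u : V, a (P_H u + Q u) u =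
      (‖u‖^2 : ℂ) - (κ:ℂ)^2 * ⟪u, Q u⟫ + Complex.I * ⟪u, T (Q u)⟫ := by
  intro u
  have add_left : a (P_H u + Q u) u = a (P_H u) u + a (Q u) u := by
    simp only [ha, map_add, inner_add_right]
    ring
  -- `P_H u ∈ V_H`, so the `a`-orthogonality of `I_H` lets us test the coarse equation with `I_H u`.
  have coarse : a (P_H u) u = ⟪I_H u, u⟫ := by
    rw [← hIH u (P_H u) (hPHrange u), hPH u (I_H u) (hIHrange u)]
  have correction :
      a (Q u) u = ⟪u - I_H u, u⟫ - (κ:ℂ)^2 * ⟪u, Q u⟫ + Complex.I * ⟪u, T (Q u)⟫ := by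
    rw [ha, hQ]
  rw [add_left, coarse, correction, inner_sub_left, inner_self_eq_norm_sq_to_K,
    RCLike.ofReal_eq_complex_ofReal]
  ring
end
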